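/- arXiv:1709.04832 — 2 statements merged into one kernel-verified Lean document; each statement's English description precedes it below -/
import Mathlib

section
/- Let (L,∀) be a monadic NM-algebra and X a nonempty subset of L. Then the monadic filter of (L,∀) generated by X equals {x ∈ L | x ≥ ∀x₁ ⊙ ∀x₂ ⊙ ⋯ ⊙ ∀xₙ for some n ≥ 1 and some x₁, …, xₙ ∈ X}. -/
/-- An NM-algebra: a bounded lattice with a commutative monoid operation `odot`
(unit `⊤`) and a residuated implication `imp`, satisfying prelinearity, the weak
nilpotent minimum identity and involution of the negation `nneg x = imp x ⊥`. -/
class NMAlgebra (L : Type*) extends Lattice L, BoundedOrder L where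
  odot : L → L → L
  imp : L → L → L
  odot_comm : ∀ x y : L, odot x y = odot y x
  odot_assoc : ∀ x y z : L, odot (odot x y) z = odot x (odot y z)
  odot_top : ∀ x : L, odot x ⊤ = x
  residuation : ∀ x y z : L, odot x y ≤ z ↔ x ≤ imp y z
  prelinearity : ∀ x y : L, imp x y ⊔ imp y x = ⊤
  wnm : ∀ x y : L, imp (odot x y) ⊥ ⊔ imp (x ⊓ y) (odot x y) = ⊤
  involution : ∀ x : L, imp (imp x ⊥) ⊥ = x

namespace NMAlgebra

variable {L : Type*} [NMAlgebra L]

/-- Negation `¬x := x → 0`. -/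
def nneg (x : L) : L := imp x ⊥

/-- `x ⊕ y := ¬x → y`. -/
def oplus (x y : L) : L := imp (nneg x) y

/-- `n`-fold `⊙`-power, with `opow a 0 = ⊤`. -/
def opow (a : L) : ℕ → L
  | 0 => ⊤
  | n + 1 => odot a (opow a n)

/-- A universal quantifier on an NM-algebra: (U1)–(U4). -/
def IsUQ (q : L → L) : Prop :=
  (∀ x : L, q x ≤ x) ∧
  (∀ x y : L, q (imp (nneg x) (q y)) = imp (nneg (q x)) (q y)) ∧
  (∀ x y : L, q (imp (q x) y) = imp (q x) (q y)) ∧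
  (∀ x y : L, q (x ⊔ q y) = q x ⊔ q y)

/-- A strong universal quantifier on an NM-algebra: (U1),(U2),(U3),(U4'). -/
def IsStrongUQ (q : L → L) : Prop :=
  (∀ x : L, q x ≤ x) ∧
  (∀ x y : L, q (imp (nneg x) (q y)) = imp (nneg (q x)) (q y)) ∧
  (∀ x y : L, q (imp (q x) y) = imp (q x) (q y)) ∧
  (∀ x y : L, q (x ⊔ y) = q x ⊔ q y)

/-- A filter of an NM-algebra: nonempty, closed under `⊙` and upward closed. -/
def IsNMFilter (F : Set L) : Prop :=
  F.Nonempty ∧ (∀ x ∈ F, ∀ y ∈ F, odot x y ∈ F) ∧ ∀ x ∈ F, ∀ y : L, x ≤ y → y ∈ F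

/-- A monadic filter of `(L, q)`: a filter closed under `q`. -/
def IsMonadicFilter (q : L → L) (F : Set L) : Prop :=
  IsNMFilter F ∧ ∀ x ∈ F, q x ∈ F

/-- The smallest monadic filter containing `X`. -/
def genMF (q : L → L) (X : Set L) : Set L :=
  ⋂₀ {F : Set L | IsMonadicFilter q F ∧ X ⊆ F}

/-- The smallest filter containing `X`. -/
def genF (X : Set L) : Set L :=
  ⋂₀ {F : Set L | IsNMFilter F ∧ X ⊆ F}

/-- A filter of the subalgebra carried by `S ⊆ L`: a nonempty subset of `S`
closed under `⊙` and upward closed within `S`. -/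
def IsFilterOn (S : Set L) (G : Set L) : Prop :=
  G ⊆ S ∧ G.Nonempty ∧ (∀ x ∈ G, ∀ y ∈ G, odot x y ∈ G) ∧
    ∀ x ∈ G, ∀ y ∈ S, x ≤ y → y ∈ G

/-- A prime monadic filter: a proper monadic filter `P` such that
`F₁ ∩ F₂ ⊆ P` implies `F₁ ⊆ P` or `F₂ ⊆ P` for monadic filters `F₁, F₂`. -/
def IsPrimeMF (q : L → L) (P : Set L) : Prop :=
  IsMonadicFilter q P ∧ P ≠ Set.univ ∧
    ∀ F₁ F₂ : Set L, IsMonadicFilter q F₁ → IsMonadicFilter q F₂ →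
      F₁ ∩ F₂ ⊆ P → F₁ ⊆ P ∨ F₂ ⊆ P

/-- A prime filter: a proper filter `P` with `x ⊔ y ∈ P → x ∈ P ∨ y ∈ P`. -/
def IsPrimeF (P : Set L) : Prop :=
  IsNMFilter P ∧ P ≠ Set.univ ∧ ∀ x y : L, x ⊔ y ∈ P → x ∈ P ∨ y ∈ P

/-- A monadic congruence on `(L, q)`: an equivalence relation compatible with
`⊓`, `⊔`, `⊙`, `→` and with `q`. -/
def IsMonadicCong (q : L → L) (θ : L → L → Prop) : Prop :=
  Equivalence θ ∧
  (∀ a b c d : L, θ a b → θ c d → θ (a ⊓ c) (b ⊓ d)) ∧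
  (∀ a b c d : L, θ a b → θ c d → θ (a ⊔ c) (b ⊔ d)) ∧
  (∀ a b c d : L, θ a b → θ c d → θ (odot a c) (odot b d)) ∧
  (∀ a b c d : L, θ a b → θ c d → θ (imp a c) (imp b d)) ∧
  ∀ a b : L, θ a b → θ (q a) (q b)

end NMAlgebra

open NMAlgebra

section Aux

variable {L : Type*} [NMAlgebra L]

lemma aux_top_odot (a : L) : odot ⊤ a = a := by
  rw [odot_comm, odot_top]

lemma aux_odot_mono {a b c d : L} (h : a ≤ b) (h' : c ≤ d) :
    odot a c ≤ odot b d := by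
  have h1 : odot b c ≤ odot b d := by
    rw [odot_comm b c, odot_comm b d]
    exact (residuation c b (odot d b)).mpr
      (le_trans h' ((residuation d b (odot d b)).mp le_rfl))
  exact le_trans ((residuation a c (odot b c)).mpr
    (le_trans h ((residuation b c (odot b c)).mp le_rfl))) h1

lemma aux_imp_self (a : L) : imp a a = (⊤ : L) :=
  le_antisymm le_top ((residuation ⊤ a a).mp (by rw [aux_top_odot]))

lemma aux_q_idem {q : L → L} (hq : IsUQ q) (x : L) : q (q x) = q x := by
  obtain ⟨h1, h2, h3, h4⟩ := hq
  have := h4 (q x) x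
  rw [sup_idem] at this
  exact le_antisymm (h1 _) (by rw [this]; exact le_sup_right)

lemma aux_q_mono {q : L → L} (hq : IsUQ q) {a b : L} (h : a ≤ b) :
    q a ≤ q b := by
  obtain ⟨h1, h2, h3, h4⟩ := hq
  have hab : b ⊔ q a = b := sup_eq_left.mpr (le_trans (h1 a) h)
  have := h4 b a
  rw [hab] at this
  rw [this]; exact le_sup_right

lemma aux_q_top {q : L → L} (hq : IsUQ q) : q (⊤ : L) = ⊤ := by
  have h3 := hq.2.2.1
  have ht : q (imp (q (⊤ : L)) ⊤) = ⊤ := by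
    rw [h3 ⊤ ⊤]
    exact le_antisymm le_top
      ((residuation ⊤ (q ⊤) (q ⊤)).mp (by rw [aux_top_odot]))
  refine le_antisymm le_top ?_
  calc (⊤ : L) = q (imp (q (⊤ : L)) ⊤) := ht.symm
    _ ≤ q ⊤ := aux_q_mono hq le_top

lemma aux_q_odot_fixed {q : L → L} (hq : IsUQ q) {a b : L}
    (ha : q a = a) (hb : q b = b) : q (odot a b) = odot a b := by
  have h1 := hq.1
  have h3 := hq.2.2.1
  refine le_antisymm (h1 _) ?_
  have step1 : a ≤ imp (q b) (odot a b) := by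
    rw [hb]
    exact (residuation a b (odot a b)).mp le_rfl
  have step2 : q a ≤ q (imp (q b) (odot a b)) := aux_q_mono hq step1
  rw [ha, h3] at step2
  have : odot a (q b) ≤ q (odot a b) :=
    (residuation a (q b) (q (odot a b))).mpr step2
  rwa [hb] at this

lemma aux_prod_fixed {q : L → L} (hq : IsUQ q) (l : List L) :
    q ((l.map q).foldr odot ⊤) = (l.map q).foldr odot ⊤ := by
  induction l with
  | nil => simpa using aux_q_top hq
  | cons a l ih =>
    simp only [List.map_cons, List.foldr_cons]
    exact aux_q_odot_fixed hq (aux_q_idem hq a) ih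

end Aux

/-- Theorem 4.3: description of the monadic filter generated by a nonempty set:
`⟨X⟩_∀ = {x | x ≥ ∀x₁ ⊙ ⋯ ⊙ ∀xₙ, n ≥ 1, xᵢ ∈ X}`. -/
theorem monadic_nm_generated_monadic_filter
    {L : Type*} [NMAlgebra L] (q : L → L) (hq : IsUQ q)
    (X : Set L) (hX : X.Nonempty) :
    genMF q X =
      {x : L | ∃ l : List L, l ≠ [] ∧ (∀ a ∈ l, a ∈ X) ∧
        (l.map q).foldr odot ⊤ ≤ x} := by
  set S : Set L := {x : L | ∃ l : List L, l ≠ [] ∧ (∀ a ∈ l, a ∈ X) ∧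
    (l.map q).foldr odot ⊤ ≤ x} with hSdef
  have h1 := hq.1
  -- products over concatenation
  have hfoldr : ∀ (l : List L) (c : L), l.foldr odot c = odot (l.foldr odot ⊤) c := by
    intro l
    induction l with
    | nil => intro c; simp [aux_top_odot]
    | cons a l ih =>
      intro c
      simp only [List.foldr_cons, ih c, odot_assoc]
  -- S is a monadic filter containing X
  have hXS : X ⊆ S := by
    intro x hx
    exact ⟨[x], by simp, by simpa using hx, by simpa [odot_top] using h1 x⟩
  have hS : IsMonadicFilter q S := by
    refine ⟨⟨hX.imp hXS, ?_, ?_⟩, ?_⟩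
    · rintro x ⟨l₁, hne₁, hm₁, hle₁⟩ y ⟨l₂, hne₂, hm₂, hle₂⟩
      refine ⟨l₁ ++ l₂, by simp [hne₁], ?_, ?_⟩
      · intro a ha
        rcases List.mem_append.mp ha with h | h
        · exact hm₁ a h
        · exact hm₂ a h
      · rw [List.map_append, List.foldr_append, hfoldr]
        exact aux_odot_mono hle₁ hle₂
    · rintro x ⟨l, hne, hm, hle⟩ y hxy
      exact ⟨l, hne, hm, le_trans hle hxy⟩
    · rintro x ⟨l, hne, hm, hle⟩
      refine ⟨l, hne, hm, ?_⟩
      calc (l.map q).foldr odot ⊤ = q ((l.map q).foldr odot ⊤) :=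
            (aux_prod_fixed hq l).symm
        _ ≤ q x := aux_q_mono hq hle
  apply le_antisymm
  · exact Set.sInter_subset_of_mem ⟨hS, hXS⟩
  · intro x hx
    rintro F ⟨⟨⟨hFne, hFodot, hFup⟩, hFq⟩, hXF⟩
    obtain ⟨l, hne, hm, hle⟩ := hx
    have htop : (⊤ : L) ∈ F := by
      obtain ⟨a, ha⟩ := hFne
      exact hFup a ha ⊤ le_top
    have hprod : ∀ l' : List L, (∀ a ∈ l', a ∈ X) →
        (l'.map q).foldr odot ⊤ ∈ F := by
      intro l'
      induction l' with
      | nil => intro _; simpa using htop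
      | cons a l' ih =>
        intro hmem
        simp only [List.map_cons, List.foldr_cons]
        exact hFodot _ (hFq a (hXF (hmem a (by simp))))
          _ (ih fun b hb => hmem b (by simp [hb]))
    exact hFup _ (hprod l hm) x hle
end

section
/- Let (L,∀) be a strong monadic NM-algebra, F a monadic filter of (L,∀), and a ∈ L with a ∉ F. Then there exists a prime monadic filter P of (L,∀) such that F ⊆ P and a ∉ P. -/
open NMAlgebra


section AuxLemmas

variable {L : Type*} [NMAlgebra L]

lemma nm_odot_le_odot_left {a b : L} (c : L) (h : a ≤ b) : odot a c ≤ odot b c :=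
  (residuation a c _).mpr (le_trans h ((residuation b c _).mp le_rfl))

lemma nm_odot_le_odot {a b c d : L} (h1 : a ≤ b) (h2 : c ≤ d) : odot a c ≤ odot b d := by
  calc odot a c ≤ odot b c := nm_odot_le_odot_left c h1
    _ = odot c b := odot_comm b c
    _ ≤ odot d b := nm_odot_le_odot_left b h2
    _ = odot b d := odot_comm d b

lemma nm_top_odot (x : L) : odot ⊤ x = x := by rw [odot_comm, odot_top]

lemma nm_odot_le_left (x y : L) : odot x y ≤ x := by
  calc odot x y ≤ odot x ⊤ := nm_odot_le_odot le_rfl le_top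
    _ = x := odot_top x

lemma nm_odot_le_right (x y : L) : odot x y ≤ y := by
  rw [odot_comm]; exact nm_odot_le_left y x

lemma nm_top_le_imp {x y : L} (h : x ≤ y) : (⊤ : L) ≤ imp x y :=
  (residuation ⊤ x y).mp (by rw [nm_top_odot]; exact h)

lemma nm_imp_self (x : L) : imp x x = ⊤ := le_antisymm le_top (nm_top_le_imp le_rfl)

lemma nm_odot_sup (x a b : L) : odot x (a ⊔ b) = odot x a ⊔ odot x b := by
  apply le_antisymm
  · rw [odot_comm]
    apply (residuation _ x _).mpr
    apply sup_le
    · exact (residuation a x _).mp (by rw [odot_comm]; exact le_sup_left)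
    · exact (residuation b x _).mp (by rw [odot_comm]; exact le_sup_right)
  · exact sup_le (nm_odot_le_odot le_rfl le_sup_left) (nm_odot_le_odot le_rfl le_sup_right)

lemma nm_odot_rearrange (a b c d : L) :
    odot (odot a b) (odot c d) = odot (odot a c) (odot b d) := by
  rw [odot_assoc, ← odot_assoc b c d, odot_comm b c, odot_assoc c b d, ← odot_assoc]

lemma nm_opow_le_opow (c : L) {m n : ℕ} (h : m ≤ n) : opow c n ≤ opow c m := by
  induction n with
  | zero => simp only [Nat.le_zero] at h; rw [h]
  | succ n ih =>
    rcases Nat.eq_or_lt_of_le h with h' | h'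
    · rw [h']
    · exact le_trans (nm_odot_le_right c (opow c n)) (ih (Nat.lt_succ_iff.mp h'))

lemma nm_opow_add (c : L) (m n : ℕ) : opow c (m + n) = odot (opow c m) (opow c n) := by
  induction m with
  | zero => simp only [Nat.zero_add]; rw [show opow c 0 = ⊤ from rfl, nm_top_odot]
  | succ m ih =>
    have : m + 1 + n = (m + n) + 1 := by omega
    rw [this, show opow c ((m+n)+1) = odot c (opow c (m+n)) from rfl, ih,
      show opow c (m+1) = odot c (opow c m) from rfl, odot_assoc]

lemma nm_opow_sup_le (a b : L) : ∀ k m n : ℕ, m + n = k →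
    opow (a ⊔ b) k ≤ opow a m ⊔ opow b n := by
  intro k
  induction k with
  | zero =>
    intro m n h
    obtain ⟨rfl, rfl⟩ : m = 0 ∧ n = 0 := by omega
    exact le_sup_left
  | succ k ih =>
    intro m n h
    match m, n with
    | 0, n => exact le_trans le_top le_sup_left
    | m + 1, 0 => exact le_trans le_top le_sup_right
    | m + 1, n + 1 =>
      have h1 : m + (n + 1) = k := by omega
      have h2 : (m + 1) + n = k := by omega
      have expand : opow (a ⊔ b) (k + 1)
          = odot a (opow (a ⊔ b) k) ⊔ odot b (opow (a ⊔ b) k) := by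
        rw [show opow (a ⊔ b) (k+1) = odot (a ⊔ b) (opow (a ⊔ b) k) from rfl,
          odot_comm, nm_odot_sup, odot_comm (opow (a ⊔ b) k) a,
          odot_comm (opow (a ⊔ b) k) b]
      rw [expand]
      apply sup_le
      · calc odot a (opow (a ⊔ b) k) ≤ odot a (opow a m ⊔ opow b (n + 1)) :=
              nm_odot_le_odot le_rfl (ih m (n + 1) h1)
          _ = odot a (opow a m) ⊔ odot a (opow b (n + 1)) := nm_odot_sup _ _ _
          _ ≤ opow a (m + 1) ⊔ opow b (n + 1) :=
              sup_le_sup le_rfl (nm_odot_le_right _ _)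
      · calc odot b (opow (a ⊔ b) k) ≤ odot b (opow a (m + 1) ⊔ opow b n) :=
              nm_odot_le_odot le_rfl (ih (m + 1) n h2)
          _ = odot b (opow a (m + 1)) ⊔ odot b (opow b n) := nm_odot_sup _ _ _
          _ ≤ opow a (m + 1) ⊔ opow b (n + 1) :=
              sup_le_sup (nm_odot_le_right _ _) le_rfl

variable {q : L → L}

lemma nm_q_mono (hq : IsStrongUQ q) {x y : L} (h : x ≤ y) : q x ≤ q y := by
  have h2 : q y = q x ⊔ q y := by rw [← hq.2.2.2, sup_eq_right.mpr h]
  rw [h2]; exact le_sup_left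

lemma nm_q_bot (hq : IsStrongUQ q) : q (⊥ : L) = ⊥ := le_antisymm (hq.1 ⊥) bot_le

lemma nm_q_top (hq : IsStrongUQ q) : q (⊤ : L) = ⊤ := by
  have h := hq.2.2.1 ⊥ ⊥
  rw [nm_q_bot hq, nm_imp_self] at h
  exact h

lemma nm_q_idem (hq : IsStrongUQ q) (x : L) : q (q x) = q x := by
  apply le_antisymm (hq.1 _)
  have h := hq.2.2.1 x (q x)
  rw [nm_imp_self, nm_q_top hq] at h
  have h2 := (residuation ⊤ (q x) (q (q x))).mpr h.le
  rwa [nm_top_odot] at h2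

lemma nm_q_odot (hq : IsStrongUQ q) (x y : L) : odot (q x) (q y) ≤ q (odot x y) := by
  have h1 : q x ≤ imp (q y) (odot (q x) (q y)) := (residuation _ _ _).mp le_rfl
  have h2 : q (q x) ≤ q (imp (q y) (odot (q x) (q y))) := nm_q_mono hq h1
  rw [nm_q_idem hq, hq.2.2.1 y (odot (q x) (q y))] at h2
  have h3 : odot (q x) (q y) ≤ q (odot (q x) (q y)) := (residuation _ _ _).mpr h2
  exact h3.trans (nm_q_mono hq (nm_odot_le_odot (hq.1 x) (hq.1 y)))

lemma nm_q_opow (hq : IsStrongUQ q) (x : L) (n : ℕ) :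
    q (opow (q x) n) = opow (q x) n := by
  induction n with
  | zero => exact nm_q_top hq
  | succ n ih =>
    apply le_antisymm (hq.1 _)
    calc opow (q x) (n + 1) = odot (q (q x)) (q (opow (q x) n)) := by
          rw [nm_q_idem hq, ih]; rfl
      _ ≤ q (odot (q x) (opow (q x) n)) := nm_q_odot hq _ _
      _ = q (opow (q x) (n + 1)) := rfl

lemma nm_top_mem {F : Set L} (hF : IsNMFilter F) : (⊤ : L) ∈ F := by
  obtain ⟨x, hx⟩ := hF.1
  exact hF.2.2 x hx ⊤ le_top

lemma nm_opow_mem {F : Set L} (hF : IsNMFilter F) {z : L} (hz : z ∈ F) (k : ℕ) :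
    opow z k ∈ F := by
  induction k with
  | zero => exact nm_top_mem hF
  | succ k ih => exact hF.2.1 z hz _ ih

/-- The monadic filter generated by `P ∪ {x}`. -/
def extMF (q : L → L) (P : Set L) (x : L) : Set L :=
  {z | ∃ n : ℕ, ∃ p ∈ P, odot p (opow (q x) n) ≤ z}

lemma nm_subset_extMF {P : Set L} (x : L) : P ⊆ extMF q P x := by
  intro p hp
  exact ⟨0, p, hp, by rw [show opow (q x) 0 = ⊤ from rfl, odot_top]⟩

lemma nm_mem_extMF (hq : IsStrongUQ q) {P : Set L} (hP : IsMonadicFilter q P) (x : L) :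
    x ∈ extMF q P x := by
  refine ⟨1, ⊤, nm_top_mem hP.1, ?_⟩
  rw [nm_top_odot, show opow (q x) 1 = odot (q x) (opow (q x) 0) from rfl,
    show opow (q x) 0 = (⊤ : L) from rfl, odot_top]
  exact hq.1 x

lemma nm_extMF_isMonadic (hq : IsStrongUQ q) {P : Set L} (hP : IsMonadicFilter q P)
    (x : L) : IsMonadicFilter q (extMF q P x) := by
  constructor
  · refine ⟨⟨x, nm_mem_extMF hq hP x⟩, ?_, ?_⟩
    · rintro z ⟨n, p, hp, hle⟩ w ⟨m, r, hr, hle'⟩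
      refine ⟨n + m, odot p r, hP.1.2.1 p hp r hr, ?_⟩
      rw [nm_opow_add, nm_odot_rearrange]
      exact nm_odot_le_odot hle hle'
    · rintro z ⟨n, p, hp, hle⟩ w hzw
      exact ⟨n, p, hp, hle.trans hzw⟩
  · rintro z ⟨n, p, hp, hle⟩
    refine ⟨n, q p, hP.2 p hp, ?_⟩
    calc odot (q p) (opow (q x) n) = odot (q p) (q (opow (q x) n)) := by
          rw [nm_q_opow hq]
      _ ≤ q (odot p (opow (q x) n)) := nm_q_odot hq _ _
      _ ≤ q z := nm_q_mono hq hle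

end AuxLemmas

/-- Theorem 4.17: prime monadic filter extension: if `a ∉ F` for a monadic
filter `F` of a strong monadic NM-algebra, there is a prime monadic filter `P`
with `F ⊆ P` and `a ∉ P`. -/
theorem strong_monadic_nm_prime_monadic_filter_extension
    {L : Type*} [NMAlgebra L] (q : L → L) (hq : IsStrongUQ q)
    (F : Set L) (hF : IsMonadicFilter q F) (a : L) (ha : a ∉ F) :
    ∃ P : Set L, IsPrimeMF q P ∧ F ⊆ P ∧ a ∉ P := by
  classical
  set S : Set (Set L) := {G | IsMonadicFilter q G ∧ F ⊆ G ∧ a ∉ G} with hSdef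
  have hFS : F ∈ S := ⟨hF, subset_rfl, ha⟩
  have hchain : ∀ c ⊆ S, IsChain (· ⊆ ·) c → c.Nonempty →
      ∃ ub ∈ S, ∀ s ∈ c, s ⊆ ub := by
    intro c hcS hch hne
    obtain ⟨G0, hG0⟩ := hne
    refine ⟨⋃₀ c, ⟨⟨⟨?_, ?_, ?_⟩, ?_⟩, ?_, ?_⟩, fun s hs => Set.subset_sUnion_of_mem hs⟩
    · obtain ⟨g, hg⟩ := (hcS hG0).1.1.1
      exact ⟨g, G0, hG0, hg⟩
    · rintro z ⟨G1, hG1, hz⟩ w ⟨G2, hG2, hw⟩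
      rcases hch.total hG1 hG2 with h | h
      · exact ⟨G2, hG2, (hcS hG2).1.1.2.1 z (h hz) w hw⟩
      · exact ⟨G1, hG1, (hcS hG1).1.1.2.1 z hz w (h hw)⟩
    · rintro z ⟨G1, hG1, hz⟩ w hzw
      exact ⟨G1, hG1, (hcS hG1).1.1.2.2 z hz w hzw⟩
    · rintro z ⟨G1, hG1, hz⟩
      exact ⟨G1, hG1, (hcS hG1).1.2 z hz⟩
    · exact (hcS hG0).2.1.trans (Set.subset_sUnion_of_mem hG0)
    · rintro ⟨G1, hG1, haG1⟩
      exact (hcS hG1).2.2 haG1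
  obtain ⟨P, hFP, hPmax⟩ := zorn_subset_nonempty S hchain F hFS
  obtain ⟨hPmon, hFPsub, haP⟩ := hPmax.1
  refine ⟨P, ⟨hPmon, ?_, ?_⟩, hFP, haP⟩
  · intro h
    exact haP (h ▸ Set.mem_univ a)
  · intro F₁ F₂ h₁ h₂ hsub
    by_contra hcon
    push_neg at hcon
    obtain ⟨hn1, hn2⟩ := hcon
    obtain ⟨x, hx1, hxP⟩ := Set.not_subset.mp hn1
    obtain ⟨y, hy2, hyP⟩ := Set.not_subset.mp hn2
    have amem : ∀ w : L, w ∉ P → a ∈ extMF q P w := by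
      intro w hw
      by_contra haext
      have hextS : extMF q P w ∈ S :=
        ⟨nm_extMF_isMonadic hq hPmon w, hFPsub.trans (nm_subset_extMF w), haext⟩
      exact hw (hPmax.2 hextS (nm_subset_extMF w) (nm_mem_extMF hq hPmon w))
    obtain ⟨n, p, hp, h1⟩ := amem x hxP
    obtain ⟨m, r, hr, h2⟩ := amem y hyP
    set N := max n m with hN
    have hxN : odot p (opow (q x) N) ≤ a :=
      le_trans (nm_odot_le_odot le_rfl (nm_opow_le_opow _ (le_max_left n m))) h1
    have hyN : odot r (opow (q y) N) ≤ a :=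
      le_trans (nm_odot_le_odot le_rfl (nm_opow_le_opow _ (le_max_right n m))) h2
    set z := q x ⊔ q y with hz
    have hz1 : z ∈ F₁ := h₁.1.2.2 (q x) (h₁.2 x hx1) z le_sup_left
    have hz2 : z ∈ F₂ := h₂.1.2.2 (q y) (h₂.2 y hy2) z le_sup_right
    have hzP : z ∈ P := hsub ⟨hz1, hz2⟩
    have key : opow z (N + N) ≤ opow (q x) N ⊔ opow (q y) N :=
      nm_opow_sup_le (q x) (q y) (N + N) N N rfl
    have hpr : odot (odot p r) (opow z (N + N)) ≤ a := by
      calc odot (odot p r) (opow z (N + N))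
          ≤ odot (odot p r) (opow (q x) N ⊔ opow (q y) N) :=
            nm_odot_le_odot le_rfl key
        _ = odot (odot p r) (opow (q x) N) ⊔ odot (odot p r) (opow (q y) N) :=
            nm_odot_sup _ _ _
        _ ≤ a ⊔ a := by
            apply sup_le_sup
            · exact le_trans (nm_odot_le_odot (nm_odot_le_left p r) le_rfl) hxN
            · exact le_trans (nm_odot_le_odot (nm_odot_le_right p r) le_rfl) hyN
        _ = a := sup_idem a
    have hmem : odot (odot p r) (opow z (N + N)) ∈ P :=
      hPmon.1.2.1 _ (hPmon.1.2.1 p hp r hr) _ (nm_opow_mem hPmon.1 hzP (N + N))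
    exact haP (hPmon.1.2.2 _ hmem a hpr)
end
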